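/- Let γ(t) = (t + a₃t³ + O(t⁴), b₂t² + b₃t³ + O(t⁴), c₄t⁴ + O(t⁵)) with b₂ > 0, c₄ ≠ 0, b₃ ≠ 0 (so γ has a flattening at 0). Then the third component of the generalized evolute c_γ(t) = γ(t) + (1/κ(t))N(t) − (κ'(t)/(κ(t)²τ(t)))B(t) tends to ±∞ as t → 0, while the first two components converge (to 0 and 1/(2b₂) respectively); more precisely the third component equals −b₃/(8c₄b₂t)(1 + O(t)). -/

import Mathlib

noncomputable section
open scoped RealInnerProductSpace
open Filter Asymptotics

/-- ℝ³ as a Euclidean space. -/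
abbrev E3 := EuclideanSpace ℝ (Fin 3)

/-- The point (x,y,z) of ℝ³. -/
def mk3 (x y z : ℝ) : E3 := (WithLp.equiv 2 (Fin 3 → ℝ)).symm ![x, y, z]

/-- Cross product on ℝ³. -/
def cross3 (u v : E3) : E3 :=
  mk3 (u 1 * v 2 - u 2 * v 1) (u 2 * v 0 - u 0 * v 2) (u 0 * v 1 - u 1 * v 0)

/-- Determinant of three vectors of ℝ³ (scalar triple product). -/
def det3 (u v w : E3) : ℝ :=
  u 0 * (v 1 * w 2 - v 2 * w 1) - u 1 * (v 0 * w 2 - v 2 * w 0) +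
    u 2 * (v 0 * w 1 - v 1 * w 0)

/-- Curvature of a space curve via the standard (non arc-length) formula. -/
def curvatureF (γ : ℝ → E3) (t : ℝ) : ℝ :=
  ‖cross3 (deriv γ t) (iteratedDeriv 2 γ t)‖ / ‖deriv γ t‖ ^ 3

/-- Torsion of a space curve via the standard (non arc-length) formula. -/
def torsionF (γ : ℝ → E3) (t : ℝ) : ℝ :=
  ⟪cross3 (deriv γ t) (iteratedDeriv 2 γ t), iteratedDeriv 3 γ t⟫ /
    ‖cross3 (deriv γ t) (iteratedDeriv 2 γ t)‖ ^ 2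

/-- Unit tangent. -/
def tangentF (γ : ℝ → E3) (t : ℝ) : E3 := ‖deriv γ t‖⁻¹ • deriv γ t

/-- Unit binormal. -/
def binormalF (γ : ℝ → E3) (t : ℝ) : E3 :=
  ‖cross3 (deriv γ t) (iteratedDeriv 2 γ t)‖⁻¹ • cross3 (deriv γ t) (iteratedDeriv 2 γ t)

/-- Principal normal. -/
def normalF (γ : ℝ → E3) (t : ℝ) : E3 := cross3 (binormalF γ t) (tangentF γ t)

/-- Generalized evolute c_γ = γ + (1/κ)N − ((dκ/ds)/(κ²τ))B, with dκ/ds = κ'/‖γ'‖ the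
arc-length derivative of the curvature. -/
def evoluteF (γ : ℝ → E3) (t : ℝ) : E3 :=
  γ t + (1 / curvatureF γ t) • normalF γ t -
    ((deriv (curvatureF γ) t / ‖deriv γ t‖) / (curvatureF γ t ^ 2 * torsionF γ t)) •
      binormalF γ t

open Topology
open scoped ContDiff

namespace EvAux

@[simp] lemma mk3_zero (x y z : ℝ) : mk3 x y z 0 = x := by simp [mk3]
@[simp] lemma mk3_one (x y z : ℝ) : mk3 x y z 1 = y := by simp [mk3]
@[simp] lemma mk3_two (x y z : ℝ) : mk3 x y z 2 = z := by simp [mk3]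

lemma cross3_mk3 (a b c d e f : ℝ) :
    cross3 (mk3 a b c) (mk3 d e f) = mk3 (b*f - c*e) (c*d - a*f) (a*e - b*d) := by
  simp [cross3]

lemma norm_mk3 (x y z : ℝ) : ‖mk3 x y z‖ = Real.sqrt (x^2 + y^2 + z^2) := by
  rw [EuclideanSpace.norm_eq]
  simp [Fin.sum_univ_three, sq_abs]

lemma inner_mk3 (a b c d e f : ℝ) : ⟪mk3 a b c, mk3 d e f⟫ = a*d + b*e + c*f := by
  simp [PiLp.inner_apply, Fin.sum_univ_three, mk3]
  ring

lemma smul_mk3 (r a b c : ℝ) : r • mk3 a b c = mk3 (r*a) (r*b) (r*c) := by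
  refine PiLp.ext fun i => ?_
  fin_cases i <;> simp [mk3]

lemma hasDerivAt_mk3 {x y z : ℝ → ℝ} {x' y' z' : ℝ} {t : ℝ}
    (hx : HasDerivAt x x' t) (hy : HasDerivAt y y' t) (hz : HasDerivAt z z' t) :
    HasDerivAt (fun t => mk3 (x t) (y t) (z t)) (mk3 x' y' z') t := by
  have h : HasDerivAt (fun t => ![x t, y t, z t]) ![x', y', z'] t := by
    apply hasDerivAt_pi.2
    intro i
    fin_cases i <;> simpa using ‹_›
  exact ((PiLp.continuousLinearEquiv 2 ℝ (fun _ : Fin 3 => ℝ)).symm.toContinuousLinearMap.hasFDerivAt.comp_hasDerivAt t h :)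

lemma rem_hasDerivAt {m : ℕ} (hm : 1 ≤ m) {r : ℝ → ℝ} (hr : Differentiable ℝ r) (t : ℝ) :
    HasDerivAt (fun t => t^m * r t) (t^(m-1) * (m * r t + t * deriv r t)) t := by
  obtain ⟨k, rfl⟩ : ∃ k, m = k + 1 := ⟨m - 1, (Nat.succ_pred_eq_of_pos hm).symm⟩
  have h : HasDerivAt (fun t => t^(k+1) * r t) _ t := (hasDerivAt_pow (k+1) t).mul (hr t).hasDerivAt
  convert h using 1
  simp only [Nat.add_sub_cancel]
  push_cast
  ring

lemma apply_comb (u v w : E3) (a b : ℝ) (i : Fin 3) :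
    (u + a • v - b • w) i = u i + a * v i - b * w i := by simp

lemma contDiff_deriv_of_top {r : ℝ → ℝ} (hr : ContDiff ℝ ∞ r) : ContDiff ℝ ∞ (deriv r) :=
  (contDiff_infty_iff_deriv.1 hr).2

set_option maxHeartbeats 4000000 in
theorem main_aux (a₃ b₂ b₃ c₄ : ℝ) (hb₂ : 0 < b₂) (hc₄ : c₄ ≠ 0) (hb₃ : b₃ ≠ 0)
    (γ : ℝ → E3) (X Y Z X1 Y1 Z1 X2 Y2 Z2 X3 Y3 Z3 p1 p2 p3 q1 q2 q3 v1 v2 v3 : ℝ → ℝ)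
    (hXc : ContDiff ℝ ∞ X) (hYc : ContDiff ℝ ∞ Y) (hZc : ContDiff ℝ ∞ Z)
    (hp1 : ContDiff ℝ ∞ p1) (hp2 : ContDiff ℝ ∞ p2) (hp3 : ContDiff ℝ ∞ p3)
    (hq1 : ContDiff ℝ ∞ q1) (hq2 : ContDiff ℝ ∞ q2) (hq3 : ContDiff ℝ ∞ q3)
    (hv1 : ContDiff ℝ ∞ v1) (hv2 : ContDiff ℝ ∞ v2) (hv3 : ContDiff ℝ ∞ v3)
    (hX0 : X 0 = 0) (hY0 : Y 0 = 0) (hZ0 : Z 0 = 0)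
    (sX1 : ∀ t, X1 t = 1 + 3*a₃*t^2 + t^3 * p1 t)
    (sX2 : ∀ t, X2 t = 6*a₃*t + t^2 * p2 t)
    (sX3 : ∀ t, X3 t = 6*a₃ + t * p3 t)
    (sY1 : ∀ t, Y1 t = 2*b₂*t + 3*b₃*t^2 + t^3 * q1 t)
    (sY2 : ∀ t, Y2 t = 2*b₂ + 6*b₃*t + t^2 * q2 t)
    (sY3 : ∀ t, Y3 t = 6*b₃ + t * q3 t)
    (sZ1 : ∀ t, Z1 t = 4*c₄*t^3 + t^4 * v1 t)
    (sZ2 : ∀ t, Z2 t = 12*c₄*t^2 + t^3 * v2 t)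
    (sZ3 : ∀ t, Z3 t = 24*c₄*t + t^2 * v3 t)
    (hg0 : ∀ t, γ t = mk3 (X t) (Y t) (Z t))
    (hg1 : ∀ t, deriv γ t = mk3 (X1 t) (Y1 t) (Z1 t))
    (hg2 : ∀ t, iteratedDeriv 2 γ t = mk3 (X2 t) (Y2 t) (Z2 t))
    (hg3 : ∀ t, iteratedDeriv 3 γ t = mk3 (X3 t) (Y3 t) (Z3 t)) :
    Tendsto (fun t => evoluteF γ t 0) (nhdsWithin 0 {(0 : ℝ)}ᶜ) (nhds 0) ∧
    Tendsto (fun t => evoluteF γ t 1) (nhdsWithin 0 {(0 : ℝ)}ᶜ) (nhds (1 / (2 * b₂))) ∧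
    Tendsto (fun t => |evoluteF γ t 2|) (nhdsWithin 0 {(0 : ℝ)}ᶜ) atTop ∧
    Tendsto (fun t => t * evoluteF γ t 2) (nhdsWithin 0 {(0 : ℝ)}ᶜ)
      (nhds (-(b₃ / (8 * c₄ * b₂)))) ∧
    (fun t => evoluteF γ t 2 + b₃ / (8 * c₄ * b₂ * t))
      =O[nhdsWithin 0 {(0 : ℝ)}ᶜ] (fun _ => (1 : ℝ)) := by
  have h1le : (∞ : WithTop ℕ∞) ≠ 0 := by simp
  have eX1 : X1 = fun t => 1 + 3*a₃*t^2 + t^3 * p1 t := funext sX1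
  have eX2 : X2 = fun t => 6*a₃*t + t^2 * p2 t := funext sX2
  have eX3 : X3 = fun t => 6*a₃ + t * p3 t := funext sX3
  have eY1 : Y1 = fun t => 2*b₂*t + 3*b₃*t^2 + t^3 * q1 t := funext sY1
  have eY2 : Y2 = fun t => 2*b₂ + 6*b₃*t + t^2 * q2 t := funext sY2
  have eY3 : Y3 = fun t => 6*b₃ + t * q3 t := funext sY3
  have eZ1 : Z1 = fun t => 4*c₄*t^3 + t^4 * v1 t := funext sZ1
  have eZ2 : Z2 = fun t => 12*c₄*t^2 + t^3 * v2 t := funext sZ2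
  have eZ3 : Z3 = fun t => 24*c₄*t + t^2 * v3 t := funext sZ3
  have hX1c : ContDiff ℝ ∞ X1 := by rw [eX1]; fun_prop
  have hX2c : ContDiff ℝ ∞ X2 := by rw [eX2]; fun_prop
  have hX3c : ContDiff ℝ ∞ X3 := by rw [eX3]; fun_prop
  have hY1c : ContDiff ℝ ∞ Y1 := by rw [eY1]; fun_prop
  have hY2c : ContDiff ℝ ∞ Y2 := by rw [eY2]; fun_prop
  have hY3c : ContDiff ℝ ∞ Y3 := by rw [eY3]; fun_prop
  have hZ1c : ContDiff ℝ ∞ Z1 := by rw [eZ1]; fun_prop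
  have hZ2c : ContDiff ℝ ∞ Z2 := by rw [eZ2]; fun_prop
  have hZ3c : ContDiff ℝ ∞ Z3 := by rw [eZ3]; fun_prop
  set A := fun t : ℝ => X1 t^2 + Y1 t^2 + Z1 t^2 with hAdef
  set c0 := fun t : ℝ => Y1 t * Z2 t - Z1 t * Y2 t with hc0def
  set c1 := fun t : ℝ => Z1 t * X2 t - X1 t * Z2 t with hc1def
  set c2 := fun t : ℝ => X1 t * Y2 t - Y1 t * X2 t with hc2def
  set M := fun t : ℝ => c0 t^2 + c1 t^2 + c2 t^2 with hMdef
  set nrm := fun t : ℝ => Real.sqrt (A t) with hnrmdef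
  set mm := fun t : ℝ => Real.sqrt (M t) with hmmdef
  set kap := fun t : ℝ => mm t / nrm t ^ 3 with hkapdef
  set C0 := fun t : ℝ => (2*b₂ + 3*b₃*t + t^2 * q1 t) * (12*c₄ + t * v2 t)
      - (4*c₄ + t * v1 t) * (2*b₂ + 6*b₃*t + t^2 * q2 t) with hC0def
  set C1 := fun t : ℝ => t^2 * ((4*c₄ + t * v1 t) * (6*a₃ + t * p2 t))
      - (1 + 3*a₃*t^2 + t^3 * p1 t) * (12*c₄ + t * v2 t) with hC1def
  set Dd := fun t : ℝ => t^2 * C0 t * X3 t + t * C1 t * Y3 t + c2 t * (24*c₄ + t * v3 t) with hDddef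
  have hfc0 : ∀ t, c0 t = t^3 * C0 t := by
    intro t
    simp only [hc0def, hC0def, sY1 t, sY2 t, sZ1 t, sZ2 t]
    ring
  have hfc1 : ∀ t, c1 t = t^2 * C1 t := by
    intro t
    simp only [hc1def, hC1def, sX1 t, sX2 t, sZ1 t, sZ2 t]
    ring
  have hdet : ∀ t, c0 t * X3 t + c1 t * Y3 t + c2 t * Z3 t = t * Dd t := by
    intro t
    rw [hfc0 t, hfc1 t, sZ3 t]
    simp only [hDddef]
    ring
  have hX10 : X1 0 = 1 := by rw [sX1]; norm_num
  have hX20 : X2 0 = 0 := by rw [sX2]; norm_num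
  have hY10 : Y1 0 = 0 := by rw [sY1]; norm_num
  have hY20 : Y2 0 = 2*b₂ := by rw [sY2]; norm_num
  have hZ10 : Z1 0 = 0 := by rw [sZ1]; norm_num
  have hc00 : c0 0 = 0 := by rw [hfc0]; ring
  have hc10 : c1 0 = 0 := by rw [hfc1]; ring
  have hc20 : c2 0 = 2*b₂ := by
    simp only [hc2def]
    rw [hX10, hY20, hY10, hX20]
    ring
  have hA0 : A 0 = 1 := by simp only [hAdef]; rw [hX10, hY10, hZ10]; norm_num
  have hM0 : M 0 = 4*b₂^2 := by simp only [hMdef]; rw [hc00, hc10, hc20]; ring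
  have hnrm0 : nrm 0 = 1 := by simp only [hnrmdef]; rw [hA0, Real.sqrt_one]
  have hmm0 : mm 0 = 2*b₂ := by
    simp only [hmmdef]
    rw [hM0, show (4:ℝ)*b₂^2 = (2*b₂)^2 by ring, Real.sqrt_sq (by positivity)]
  have hDd0 : Dd 0 = 48*b₂*c₄ := by simp only [hDddef]; rw [hc20]; ring
  have hAc : ContDiff ℝ ∞ A := by rw [hAdef]; fun_prop
  have hc0c : ContDiff ℝ ∞ c0 := by rw [hc0def]; fun_prop
  have hc1c : ContDiff ℝ ∞ c1 := by rw [hc1def]; fun_prop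
  have hc2c : ContDiff ℝ ∞ c2 := by rw [hc2def]; fun_prop
  have hMc : ContDiff ℝ ∞ M := by rw [hMdef]; fun_prop
  have hC0c : ContDiff ℝ ∞ C0 := by rw [hC0def]; fun_prop
  have hC1c : ContDiff ℝ ∞ C1 := by rw [hC1def]; fun_prop
  have hDdc : ContDiff ℝ ∞ Dd := by rw [hDddef]; fun_prop
  set U := {t : ℝ | 0 < A t ∧ 0 < M t ∧ Dd t ≠ 0} with hUdef
  have hUopen : IsOpen U := by
    rw [hUdef]
    exact (isOpen_lt continuous_const hAc.continuous).inter
      ((isOpen_lt continuous_const hMc.continuous).inter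
        (isOpen_ne_fun hDdc.continuous continuous_const))
  have h0U : (0:ℝ) ∈ U := by
    refine ⟨by rw [hA0]; norm_num, by rw [hM0]; positivity, by
      rw [hDd0]; exact mul_ne_zero (by positivity) hc₄⟩
  have hUnhds : U ∈ 𝓝 (0:ℝ) := hUopen.mem_nhds h0U
  have hnd : ∀ t, ‖deriv γ t‖ = nrm t := by
    intro t
    rw [hg1 t, norm_mk3]
  have hcr : ∀ t, cross3 (deriv γ t) (iteratedDeriv 2 γ t) = mk3 (c0 t) (c1 t) (c2 t) := by
    intro t
    rw [hg1 t, hg2 t, cross3_mk3]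
  have hnc : ∀ t, ‖cross3 (deriv γ t) (iteratedDeriv 2 γ t)‖ = mm t := by
    intro t
    rw [hcr t, norm_mk3]
  have hkapeq : curvatureF γ = kap := by
    funext t
    simp only [curvatureF]
    rw [hnc t, hnd t]
  have hMnn : ∀ t, 0 ≤ M t := by intro t; simp only [hMdef]; positivity
  have hmmsq : ∀ t, mm t ^ 2 = M t := fun t => Real.sq_sqrt (hMnn t)
  have htor : ∀ t, torsionF γ t = (t * Dd t) / M t := by
    intro t
    simp only [torsionF]
    rw [hnc t, hcr t, hg3 t, inner_mk3, hmmsq t, hdet t]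
  have hkapC : ContDiffOn ℝ ∞ kap U := by
    simp only [hkapdef, hmmdef, hnrmdef]
    intro t ht
    simp only [hUdef, Set.mem_setOf_eq] at ht
    exact (((Real.contDiffAt_sqrt (ne_of_gt ht.2.1)).comp t hMc.contDiffAt).div
      (((Real.contDiffAt_sqrt (ne_of_gt ht.1)).comp t hAc.contDiffAt).pow 3)
      (pow_ne_zero 3 (ne_of_gt (Real.sqrt_pos.2 ht.1)))).contDiffWithinAt
  have hk'C : ContDiffOn ℝ ∞ (deriv kap) U :=
    ((contDiffOn_infty_iff_deriv_of_isOpen hUopen).1 hkapC).2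
  have hk'at : ContDiffAt ℝ ∞ (deriv kap) 0 := hk'C.contDiffAt hUnhds
  have hk'cont : ContinuousAt (deriv kap) 0 := hk'at.continuousAt
  have hk'diff : DifferentiableAt ℝ (deriv kap) 0 := hk'at.differentiableAt h1le
  -- pointwise derivatives at 0
  have dX1 : HasDerivAt X1 0 0 := by
    rw [eX1]
    have h := ((hasDerivAt_const (0:ℝ) (1:ℝ)).add
      ((hasDerivAt_pow 2 (0:ℝ)).const_mul (3*a₃))).add
      (rem_hasDerivAt (by norm_num : 1 ≤ 3) (hp1.differentiable h1le) 0)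
    refine h.congr_deriv ?_
    norm_num
  have dY1 : HasDerivAt Y1 (2*b₂) 0 := by
    rw [eY1]
    have h := (((hasDerivAt_id' (x := (0:ℝ))).const_mul (2*b₂)).add
      ((hasDerivAt_pow 2 (0:ℝ)).const_mul (3*b₃))).add
      (rem_hasDerivAt (by norm_num : 1 ≤ 3) (hq1.differentiable h1le) 0)
    refine h.congr_deriv ?_
    norm_num
  have dZ1 : HasDerivAt Z1 0 0 := by
    rw [eZ1]
    have h := (((hasDerivAt_pow 3 (0:ℝ)).const_mul (4*c₄))).add
      (rem_hasDerivAt (by norm_num : 1 ≤ 4) (hv1.differentiable h1le) 0)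
    refine h.congr_deriv ?_
    norm_num
  have dX2 : HasDerivAt X2 (6*a₃) 0 := by
    rw [eX2]
    have h := (((hasDerivAt_id' (x := (0:ℝ))).const_mul (6*a₃))).add
      (rem_hasDerivAt (by norm_num : 1 ≤ 2) (hp2.differentiable h1le) 0)
    refine h.congr_deriv ?_
    norm_num
  have dY2 : HasDerivAt Y2 (6*b₃) 0 := by
    rw [eY2]
    have h := ((hasDerivAt_const (0:ℝ) (2*b₂)).add
      ((hasDerivAt_id' (x := (0:ℝ))).const_mul (6*b₃))).add
      (rem_hasDerivAt (by norm_num : 1 ≤ 2) (hq2.differentiable h1le) 0)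
    refine h.congr_deriv ?_
    norm_num
  have dc2 : HasDerivAt c2 (6*b₃) 0 := by
    simp only [hc2def]
    have h := (dX1.mul dY2).sub (dY1.mul dX2)
    refine h.congr_deriv ?_
    rw [hX10, hX20, hY10]
    ring
  have dc0 : HasDerivAt c0 0 0 := by
    rw [funext hfc0]
    have h := rem_hasDerivAt (by norm_num : 1 ≤ 3) (hC0c.differentiable h1le) 0
    refine h.congr_deriv ?_
    norm_num
  have dc1 : HasDerivAt c1 0 0 := by
    rw [funext hfc1]
    have h := rem_hasDerivAt (by norm_num : 1 ≤ 2) (hC1c.differentiable h1le) 0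
    refine h.congr_deriv ?_
    norm_num
  have dM : HasDerivAt M (24*b₂*b₃) 0 := by
    simp only [hMdef]
    have h := ((dc0.pow 2).add (dc1.pow 2)).add (dc2.pow 2)
    refine h.congr_deriv ?_
    rw [hc00, hc10, hc20]
    ring
  have dA : HasDerivAt A 0 0 := by
    simp only [hAdef]
    have h := ((dX1.pow 2).add (dY1.pow 2)).add (dZ1.pow 2)
    refine h.congr_deriv ?_
    rw [hY10]
    ring
  have dmm : HasDerivAt mm (6*b₃) 0 := by
    simp only [hmmdef]
    have h := (Real.hasDerivAt_sqrt (by rw [hM0]; positivity)).comp 0 dM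
    refine h.congr_deriv ?_
    rw [hM0, show (4:ℝ)*b₂^2 = (2*b₂)^2 by ring, Real.sqrt_sq (by positivity)]
    field_simp
    ring
  have dnrm : HasDerivAt nrm 0 0 := by
    simp only [hnrmdef]
    have h := (Real.hasDerivAt_sqrt (by rw [hA0]; norm_num)).comp 0 dA
    refine h.congr_deriv ?_
    norm_num
  have dkap : HasDerivAt kap (6*b₃) 0 := by
    simp only [hkapdef]
    have h := dmm.div (dnrm.pow 3) (by rw [Pi.pow_apply, hnrm0]; norm_num)
    refine h.congr_deriv ?_
    simp only [Pi.pow_apply]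
    rw [hnrm0, hmm0]
    ring
  have hk'0 : deriv kap 0 = 6*b₃ := dkap.deriv
  -- component formulas
  have hBv : ∀ t, binormalF γ t = mk3 ((mm t)⁻¹ * c0 t) ((mm t)⁻¹ * c1 t) ((mm t)⁻¹ * c2 t) := by
    intro t
    simp only [binormalF]
    rw [hnc t, hcr t, smul_mk3]
  have hTv : ∀ t, tangentF γ t = mk3 ((nrm t)⁻¹ * X1 t) ((nrm t)⁻¹ * Y1 t) ((nrm t)⁻¹ * Z1 t) := by
    intro t
    simp only [tangentF]
    rw [hnd t, hg1 t, smul_mk3]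
  have hNv : ∀ t, normalF γ t = mk3
      (((mm t)⁻¹*c1 t)*((nrm t)⁻¹*Z1 t) - ((mm t)⁻¹*c2 t)*((nrm t)⁻¹*Y1 t))
      (((mm t)⁻¹*c2 t)*((nrm t)⁻¹*X1 t) - ((mm t)⁻¹*c0 t)*((nrm t)⁻¹*Z1 t))
      (((mm t)⁻¹*c0 t)*((nrm t)⁻¹*Y1 t) - ((mm t)⁻¹*c1 t)*((nrm t)⁻¹*X1 t)) := by
    intro t
    simp only [normalF]
    rw [hBv t, hTv t, cross3_mk3]
  have hcomp : ∀ (t : ℝ) (i : Fin 3), evoluteF γ t i = γ t i + (1/curvatureF γ t) * (normalF γ t i)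
      - ((deriv (curvatureF γ) t / ‖deriv γ t‖)/(curvatureF γ t^2 * torsionF γ t)) * (binormalF γ t i) := by
    intro t i
    unfold evoluteF
    exact apply_comb _ _ _ _ _ i
  have hkapt : ∀ s, kap s = mm s / nrm s ^ 3 := fun _ => rfl
  clear_value A c0 c1 c2 M nrm mm kap C0 C1 Dd U
  set g0 : ℝ → ℝ := fun t => X t + (nrm t^2/(mm t^2)) * (c1 t * Z1 t - c2 t * Y1 t)
      - t^2 * (deriv kap t) * nrm t^5 * C0 t/(Dd t * mm t) with hg0def
  set g1 : ℝ → ℝ := fun t => Y t + (nrm t^2/(mm t^2)) * (c2 t * X1 t - c0 t * Z1 t)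
      - t * (deriv kap t) * nrm t^5 * C1 t/(Dd t * mm t) with hg1def
  set G : ℝ → ℝ := fun t => t * Z t + t * (nrm t^2/(mm t^2)) * (c0 t * Y1 t - c1 t * X1 t)
      - (deriv kap t) * nrm t^5 * c2 t/(Dd t * mm t) with hGdef
  clear_value g0 g1 G
  have hE0 : ∀ t, t ∈ U → t ≠ 0 → evoluteF γ t 0 = g0 t := by
    intro t ht hne
    simp only [hUdef, Set.mem_setOf_eq] at ht
    obtain ⟨hApos, hMpos, hDne⟩ := ht
    have hmmne : mm t ≠ 0 := by
      simp only [hmmdef]; exact ne_of_gt (Real.sqrt_pos.2 hMpos)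
    have hnrmne : nrm t ≠ 0 := by
      simp only [hnrmdef]; exact ne_of_gt (Real.sqrt_pos.2 hApos)
    rw [hcomp t 0, hkapeq, htor t, hnd t, hNv t, hBv t, hg0 t]
    simp only [mk3_zero]
    rw [hfc0 t, ← hmmsq t]
    simp only [hg0def]
    rw [hkapt t]
    field_simp
  have hE1 : ∀ t, t ∈ U → t ≠ 0 → evoluteF γ t 1 = g1 t := by
    intro t ht hne
    simp only [hUdef, Set.mem_setOf_eq] at ht
    obtain ⟨hApos, hMpos, hDne⟩ := ht
    have hmmne : mm t ≠ 0 := by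
      simp only [hmmdef]; exact ne_of_gt (Real.sqrt_pos.2 hMpos)
    have hnrmne : nrm t ≠ 0 := by
      simp only [hnrmdef]; exact ne_of_gt (Real.sqrt_pos.2 hApos)
    rw [hcomp t 1, hkapeq, htor t, hnd t, hNv t, hBv t, hg0 t]
    simp only [mk3_one]
    rw [hfc0 t, hfc1 t, ← hmmsq t]
    simp only [hg1def]
    rw [hkapt t]
    rw [hfc0 t]
    field_simp
  have hE2 : ∀ t, t ∈ U → t ≠ 0 → t * evoluteF γ t 2 = G t := by
    intro t ht hne
    simp only [hUdef, Set.mem_setOf_eq] at ht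
    obtain ⟨hApos, hMpos, hDne⟩ := ht
    have hmmne : mm t ≠ 0 := by
      simp only [hmmdef]; exact ne_of_gt (Real.sqrt_pos.2 hMpos)
    have hnrmne : nrm t ≠ 0 := by
      simp only [hnrmdef]; exact ne_of_gt (Real.sqrt_pos.2 hApos)
    rw [hcomp t 2, hkapeq, htor t, hnd t, hNv t, hBv t, hg0 t]
    simp only [mk3_two]
    rw [← hmmsq t]
    simp only [hGdef]
    rw [hkapt t]
    field_simp
  -- continuity / differentiability at 0
  have cnrm : ContinuousAt nrm 0 := dnrm.differentiableAt.continuousAt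
  have cmm : ContinuousAt mm 0 := dmm.differentiableAt.continuousAt
  have hmm0ne : mm 0 ≠ 0 := by rw [hmm0]; positivity
  have hDd0ne : Dd 0 ≠ 0 := by rw [hDd0]; exact mul_ne_zero (by positivity) hc₄
  have hDMne : Dd 0 * mm 0 ≠ 0 := mul_ne_zero hDd0ne hmm0ne
  have hmm2ne : mm 0 ^ 2 ≠ 0 := pow_ne_zero 2 hmm0ne
  have cg0 : ContinuousAt g0 0 := by
    rw [hg0def]
    exact ((hXc.continuous.continuousAt.add
      (((cnrm.pow 2).div (cmm.pow 2) hmm2ne).mul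
        ((hc1c.continuous.continuousAt.mul hZ1c.continuous.continuousAt).sub
          (hc2c.continuous.continuousAt.mul hY1c.continuous.continuousAt)))).sub
      (((((continuousAt_id.pow 2).mul hk'cont).mul (cnrm.pow 5)).mul
        hC0c.continuous.continuousAt).div
        (hDdc.continuous.continuousAt.mul cmm) hDMne))
  have cg1 : ContinuousAt g1 0 := by
    rw [hg1def]
    exact ((hYc.continuous.continuousAt.add
      (((cnrm.pow 2).div (cmm.pow 2) hmm2ne).mul
        ((hc2c.continuous.continuousAt.mul hX1c.continuous.continuousAt).sub
          (hc0c.continuous.continuousAt.mul hZ1c.continuous.continuousAt)))).sub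
      ((((continuousAt_id.mul hk'cont).mul (cnrm.pow 5)).mul
        hC1c.continuous.continuousAt).div
        (hDdc.continuous.continuousAt.mul cmm) hDMne))
  have hGdiff : DifferentiableAt ℝ G 0 := by
    rw [hGdef]
    exact ((differentiableAt_id.mul ((hZc.differentiable h1le) 0)).add
      ((differentiableAt_id.mul ((dnrm.differentiableAt.pow 2).div
        (dmm.differentiableAt.pow 2) hmm2ne)).mul
        ((dc0.differentiableAt.mul dY1.differentiableAt).sub
          (dc1.differentiableAt.mul dX1.differentiableAt)))).sub
      (((hk'diff.mul (dnrm.differentiableAt.pow 5)).mul dc2.differentiableAt).div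
        (((hDdc.differentiable h1le) 0).mul dmm.differentiableAt) hDMne)
  have hGcont : ContinuousAt G 0 := hGdiff.continuousAt
  have hg00 : g0 0 = 0 := by
    simp only [hg0def]
    rw [hX0, hc10, hZ10, hc20, hY10]
    norm_num
  have hg10 : g1 0 = 1/(2*b₂) := by
    simp only [hg1def]
    rw [hY0, hc20, hX10, hc00, hZ10, hnrm0, hmm0]
    have hb : b₂ ≠ 0 := hb₂.ne'
    field_simp
    ring
  have hG0 : G 0 = -(b₃ / (8 * c₄ * b₂)) := by
    simp only [hGdef]
    rw [hZ0, hk'0, hnrm0, hmm0, hc20, hDd0]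
    have hb : b₂ ≠ 0 := hb₂.ne'
    field_simp
    ring
  -- assemble the claims
  have hev : ∀ᶠ t in 𝓝[≠] (0:ℝ), t ∈ U ∧ t ≠ 0 := by
    filter_upwards [mem_nhdsWithin_of_mem_nhds hUnhds, self_mem_nhdsWithin] with t h1 h2
    exact ⟨h1, by simpa using h2⟩
  have claim1 : Tendsto (fun t => evoluteF γ t 0) (𝓝[≠] (0:ℝ)) (𝓝 0) := by
    have h := cg0.tendsto.mono_left (nhdsWithin_le_nhds (s := {(0:ℝ)}ᶜ))
    rw [hg00] at h
    refine h.congr' ?_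
    filter_upwards [hev] with t ht
    exact (hE0 t ht.1 ht.2).symm
  have claim2 : Tendsto (fun t => evoluteF γ t 1) (𝓝[≠] (0:ℝ)) (𝓝 (1/(2*b₂))) := by
    have h := cg1.tendsto.mono_left (nhdsWithin_le_nhds (s := {(0:ℝ)}ᶜ))
    rw [hg10] at h
    refine h.congr' ?_
    filter_upwards [hev] with t ht
    exact (hE1 t ht.1 ht.2).symm
  have claim4 : Tendsto (fun t => t * evoluteF γ t 2) (𝓝[≠] (0:ℝ))
      (𝓝 (-(b₃ / (8 * c₄ * b₂)))) := by
    have h := hGcont.tendsto.mono_left (nhdsWithin_le_nhds (s := {(0:ℝ)}ᶜ))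
    rw [hG0] at h
    refine h.congr' ?_
    filter_upwards [hev] with t ht
    exact (hE2 t ht.1 ht.2).symm
  have hlimne : -(b₃ / (8 * c₄ * b₂)) ≠ 0 := by
    refine neg_ne_zero.2 (div_ne_zero hb₃ ?_)
    exact mul_ne_zero (mul_ne_zero (by norm_num) hc₄) hb₂.ne'
  have claim3 : Tendsto (fun t => |evoluteF γ t 2|) (𝓝[≠] (0:ℝ)) atTop := by
    have habs : Tendsto (fun t => |G t|) (𝓝[≠] (0:ℝ)) (𝓝 |G 0|) :=
      (hGcont.abs.tendsto.mono_left (nhdsWithin_le_nhds (s := {(0:ℝ)}ᶜ)))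
    have hpos : 0 < |G 0| := by rw [hG0]; exact abs_pos.2 hlimne
    have hinv : Tendsto (fun t : ℝ => |t|⁻¹) (𝓝[≠] (0:ℝ)) atTop :=
      tendsto_inv_nhdsGT_zero.comp tendsto_abs_nhdsNE_zero
    have h := habs.pos_mul_atTop hpos hinv
    refine h.congr' ?_
    filter_upwards [hev] with t ht
    have h3 := hE2 t ht.1 ht.2
    have h4 : evoluteF γ t 2 = G t / t := by
      rw [← h3]
      exact (mul_div_cancel_left₀ _ ht.2).symm
    rw [h4, abs_div, div_eq_mul_inv]
  have claim5 : (fun t => evoluteF γ t 2 + b₃ / (8 * c₄ * b₂ * t))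
      =O[𝓝[≠] (0:ℝ)] (fun _ => (1 : ℝ)) := by
    have hslope := hasDerivAt_iff_tendsto_slope.1 hGdiff.hasDerivAt
    have heq : (fun t => slope G 0 t) =ᶠ[𝓝[≠] (0:ℝ)]
        (fun t => evoluteF γ t 2 + b₃ / (8 * c₄ * b₂ * t)) := by
      filter_upwards [hev] with t ht
      have h3 := hE2 t ht.1 ht.2
      rw [slope_def_field, hG0, ← h3]
      have hb : b₂ ≠ 0 := hb₂.ne'
      have ht2 : t ≠ 0 := ht.2
      field_simp
      ring
    exact (hslope.congr' heq).isBigO_one ℝ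
  exact ⟨claim1, claim2, claim3, claim4, claim5⟩


end EvAux

open EvAux

set_option maxHeartbeats 1000000

/-- For γ(t) = (t + a₃t³ + O(t⁴), b₂t² + b₃t³ + O(t⁴), c₄t⁴ + O(t⁵)) with
b₂ > 0, c₄ ≠ 0, b₃ ≠ 0 (a flattening at 0), the first two components of the generalized
evolute converge to 0 and 1/(2b₂) as t → 0, while the third tends to ±∞; precisely it
equals −b₃/(8c₄b₂t)·(1 + O(t)). -/
theorem evolute_asymptotics_at_flattening
    (a₃ b₂ b₃ c₄ : ℝ) (hb₂ : 0 < b₂) (hc₄ : c₄ ≠ 0) (hb₃ : b₃ ≠ 0)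
    (γ : ℝ → E3) (r₁ r₂ r₃ : ℝ → ℝ)
    (hr₁ : ContDiff ℝ (⊤ : ℕ∞) r₁) (hr₂ : ContDiff ℝ (⊤ : ℕ∞) r₂) (hr₃ : ContDiff ℝ (⊤ : ℕ∞) r₃)
    (hγ : ∀ t, γ t = mk3 (t + a₃ * t ^ 3 + t ^ 4 * r₁ t)
      (b₂ * t ^ 2 + b₃ * t ^ 3 + t ^ 4 * r₂ t) (c₄ * t ^ 4 + t ^ 5 * r₃ t)) :
    Tendsto (fun t => evoluteF γ t 0) (nhdsWithin 0 {(0 : ℝ)}ᶜ) (nhds 0) ∧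
    Tendsto (fun t => evoluteF γ t 1) (nhdsWithin 0 {(0 : ℝ)}ᶜ) (nhds (1 / (2 * b₂))) ∧
    Tendsto (fun t => |evoluteF γ t 2|) (nhdsWithin 0 {(0 : ℝ)}ᶜ) atTop ∧
    Tendsto (fun t => t * evoluteF γ t 2) (nhdsWithin 0 {(0 : ℝ)}ᶜ)
      (nhds (-(b₃ / (8 * c₄ * b₂)))) ∧
    (fun t => evoluteF γ t 2 + b₃ / (8 * c₄ * b₂ * t))
      =O[nhdsWithin 0 {(0 : ℝ)}ᶜ] (fun _ => (1 : ℝ)) := by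
  have h1le : (∞ : WithTop ℕ∞) ≠ 0 := by simp
  have hr1 : ContDiff ℝ ∞ r₁ := hr₁.of_le (by simp)
  have hr2 : ContDiff ℝ ∞ r₂ := hr₂.of_le (by simp)
  have hr3 : ContDiff ℝ ∞ r₃ := hr₃.of_le (by simp)
  have hdr1 : ContDiff ℝ ∞ (deriv r₁) := contDiff_deriv_of_top hr1
  have hdr2 : ContDiff ℝ ∞ (deriv r₂) := contDiff_deriv_of_top hr2
  have hdr3 : ContDiff ℝ ∞ (deriv r₃) := contDiff_deriv_of_top hr3
  set p1 : ℝ → ℝ := fun t => 4 * r₁ t + t * deriv r₁ t with hp1def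
  have hp1 : ContDiff ℝ ∞ p1 := by rw [hp1def]; fun_prop
  have hdp1 : ContDiff ℝ ∞ (deriv p1) := contDiff_deriv_of_top hp1
  set p2 : ℝ → ℝ := fun t => 3 * p1 t + t * deriv p1 t with hp2def
  have hp2 : ContDiff ℝ ∞ p2 := by rw [hp2def]; fun_prop
  have hdp2 : ContDiff ℝ ∞ (deriv p2) := contDiff_deriv_of_top hp2
  set p3 : ℝ → ℝ := fun t => 2 * p2 t + t * deriv p2 t with hp3def
  have hp3 : ContDiff ℝ ∞ p3 := by rw [hp3def]; fun_prop
  set q1 : ℝ → ℝ := fun t => 4 * r₂ t + t * deriv r₂ t with hq1def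
  have hq1 : ContDiff ℝ ∞ q1 := by rw [hq1def]; fun_prop
  have hdq1 : ContDiff ℝ ∞ (deriv q1) := contDiff_deriv_of_top hq1
  set q2 : ℝ → ℝ := fun t => 3 * q1 t + t * deriv q1 t with hq2def
  have hq2 : ContDiff ℝ ∞ q2 := by rw [hq2def]; fun_prop
  have hdq2 : ContDiff ℝ ∞ (deriv q2) := contDiff_deriv_of_top hq2
  set q3 : ℝ → ℝ := fun t => 2 * q2 t + t * deriv q2 t with hq3def
  have hq3 : ContDiff ℝ ∞ q3 := by rw [hq3def]; fun_prop
  set v1 : ℝ → ℝ := fun t => 5 * r₃ t + t * deriv r₃ t with hv1def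
  have hv1 : ContDiff ℝ ∞ v1 := by rw [hv1def]; fun_prop
  have hdv1 : ContDiff ℝ ∞ (deriv v1) := contDiff_deriv_of_top hv1
  set v2 : ℝ → ℝ := fun t => 4 * v1 t + t * deriv v1 t with hv2def
  have hv2 : ContDiff ℝ ∞ v2 := by rw [hv2def]; fun_prop
  have hdv2 : ContDiff ℝ ∞ (deriv v2) := contDiff_deriv_of_top hv2
  set v3 : ℝ → ℝ := fun t => 3 * v2 t + t * deriv v2 t with hv3def
  have hv3 : ContDiff ℝ ∞ v3 := by rw [hv3def]; fun_prop
  set X : ℝ → ℝ := fun t => t + a₃ * t ^ 3 + t ^ 4 * r₁ t with hXdef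
  set Y : ℝ → ℝ := fun t => b₂ * t ^ 2 + b₃ * t ^ 3 + t ^ 4 * r₂ t with hYdef
  set Z : ℝ → ℝ := fun t => c₄ * t ^ 4 + t ^ 5 * r₃ t with hZdef
  set X1 : ℝ → ℝ := fun t => 1 + 3*a₃*t^2 + t^3 * p1 t with hX1def
  set X2 : ℝ → ℝ := fun t => 6*a₃*t + t^2 * p2 t with hX2def
  set X3 : ℝ → ℝ := fun t => 6*a₃ + t * p3 t with hX3def
  set Y1 : ℝ → ℝ := fun t => 2*b₂*t + 3*b₃*t^2 + t^3 * q1 t with hY1def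
  set Y2 : ℝ → ℝ := fun t => 2*b₂ + 6*b₃*t + t^2 * q2 t with hY2def
  set Y3 : ℝ → ℝ := fun t => 6*b₃ + t * q3 t with hY3def
  set Z1 : ℝ → ℝ := fun t => 4*c₄*t^3 + t^4 * v1 t with hZ1def
  set Z2 : ℝ → ℝ := fun t => 12*c₄*t^2 + t^3 * v2 t with hZ2def
  set Z3 : ℝ → ℝ := fun t => 24*c₄*t + t^2 * v3 t with hZ3def
  have dX : ∀ t, HasDerivAt X (X1 t) t := by
    intro t
    simp only [hXdef, hX1def, hp1def]
    have h := ((hasDerivAt_id' (x := t)).add ((hasDerivAt_pow 3 t).const_mul a₃)).add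
      (rem_hasDerivAt (by norm_num : 1 ≤ 4) (hr1.differentiable h1le) t)
    refine h.congr_deriv ?_
    norm_num
    try ring
  have dY : ∀ t, HasDerivAt Y (Y1 t) t := by
    intro t
    simp only [hYdef, hY1def, hq1def]
    have h := (((hasDerivAt_pow 2 t).const_mul b₂).add ((hasDerivAt_pow 3 t).const_mul b₃)).add
      (rem_hasDerivAt (by norm_num : 1 ≤ 4) (hr2.differentiable h1le) t)
    refine h.congr_deriv ?_
    norm_num
    try ring
  have dZ : ∀ t, HasDerivAt Z (Z1 t) t := by
    intro t
    simp only [hZdef, hZ1def, hv1def]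
    have h := ((hasDerivAt_pow 4 t).const_mul c₄).add
      (rem_hasDerivAt (by norm_num : 1 ≤ 5) (hr3.differentiable h1le) t)
    refine h.congr_deriv ?_
    norm_num
    try ring
  have dX1 : ∀ t, HasDerivAt X1 (X2 t) t := by
    intro t
    simp only [hX1def, hX2def, hp2def]
    have h := ((hasDerivAt_const t (1:ℝ)).add ((hasDerivAt_pow 2 t).const_mul (3*a₃))).add
      (rem_hasDerivAt (by norm_num : 1 ≤ 3) (hp1.differentiable h1le) t)
    refine h.congr_deriv ?_
    norm_num
    try ring
  have dY1 : ∀ t, HasDerivAt Y1 (Y2 t) t := by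
    intro t
    simp only [hY1def, hY2def, hq2def]
    have h := (((hasDerivAt_id' (x := t)).const_mul (2*b₂)).add
      ((hasDerivAt_pow 2 t).const_mul (3*b₃))).add
      (rem_hasDerivAt (by norm_num : 1 ≤ 3) (hq1.differentiable h1le) t)
    refine h.congr_deriv ?_
    norm_num
    try ring
  have dZ1 : ∀ t, HasDerivAt Z1 (Z2 t) t := by
    intro t
    simp only [hZ1def, hZ2def, hv2def]
    have h := ((hasDerivAt_pow 3 t).const_mul (4*c₄)).add
      (rem_hasDerivAt (by norm_num : 1 ≤ 4) (hv1.differentiable h1le) t)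
    refine h.congr_deriv ?_
    norm_num
    try ring
  have dX2 : ∀ t, HasDerivAt X2 (X3 t) t := by
    intro t
    simp only [hX2def, hX3def, hp3def]
    have h := ((hasDerivAt_id' (x := t)).const_mul (6*a₃)).add
      (rem_hasDerivAt (by norm_num : 1 ≤ 2) (hp2.differentiable h1le) t)
    refine h.congr_deriv ?_
    norm_num
    try ring
  have dY2 : ∀ t, HasDerivAt Y2 (Y3 t) t := by
    intro t
    simp only [hY2def, hY3def, hq3def]
    have h := ((hasDerivAt_const t (2*b₂)).add ((hasDerivAt_id' (x := t)).const_mul (6*b₃))).add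
      (rem_hasDerivAt (by norm_num : 1 ≤ 2) (hq2.differentiable h1le) t)
    refine h.congr_deriv ?_
    norm_num
    try ring
  have dZ2 : ∀ t, HasDerivAt Z2 (Z3 t) t := by
    intro t
    simp only [hZ2def, hZ3def, hv3def]
    have h := ((hasDerivAt_pow 2 t).const_mul (12*c₄)).add
      (rem_hasDerivAt (by norm_num : 1 ≤ 3) (hv2.differentiable h1le) t)
    refine h.congr_deriv ?_
    norm_num
    try ring
  have hγe : γ = fun t => mk3 (X t) (Y t) (Z t) := funext fun t => hγ t
  have hg1 : ∀ t, deriv γ t = mk3 (X1 t) (Y1 t) (Z1 t) := by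
    intro t
    rw [hγe]
    exact (hasDerivAt_mk3 (dX t) (dY t) (dZ t)).deriv
  have hg1f : deriv γ = fun t => mk3 (X1 t) (Y1 t) (Z1 t) := funext hg1
  have e2 : iteratedDeriv 2 γ = deriv (iteratedDeriv 1 γ) := iteratedDeriv_succ
  have e3 : iteratedDeriv 3 γ = deriv (iteratedDeriv 2 γ) := iteratedDeriv_succ
  have hg2 : ∀ t, iteratedDeriv 2 γ t = mk3 (X2 t) (Y2 t) (Z2 t) := by
    intro t
    rw [e2, iteratedDeriv_one, hg1f]
    exact (hasDerivAt_mk3 (dX1 t) (dY1 t) (dZ1 t)).deriv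
  have hg2f : iteratedDeriv 2 γ = fun t => mk3 (X2 t) (Y2 t) (Z2 t) := funext hg2
  have hg3 : ∀ t, iteratedDeriv 3 γ t = mk3 (X3 t) (Y3 t) (Z3 t) := by
    intro t
    rw [e3, hg2f]
    exact (hasDerivAt_mk3 (dX2 t) (dY2 t) (dZ2 t)).deriv
  have hXc : ContDiff ℝ ∞ X := by rw [hXdef]; fun_prop
  have hYc : ContDiff ℝ ∞ Y := by rw [hYdef]; fun_prop
  have hZc : ContDiff ℝ ∞ Z := by rw [hZdef]; fun_prop
  have hX0 : X 0 = 0 := by simp only [hXdef]; norm_num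
  have hY0 : Y 0 = 0 := by simp only [hYdef]; norm_num
  have hZ0 : Z 0 = 0 := by simp only [hZdef]; norm_num
  exact main_aux a₃ b₂ b₃ c₄ hb₂ hc₄ hb₃ γ X Y Z X1 Y1 Z1 X2 Y2 Z2 X3 Y3 Z3
    p1 p2 p3 q1 q2 q3 v1 v2 v3 hXc hYc hZc hp1 hp2 hp3 hq1 hq2 hq3 hv1 hv2 hv3
    hX0 hY0 hZ0 (fun t => rfl) (fun t => rfl) (fun t => rfl) (fun t => rfl)
    (fun t => rfl) (fun t => rfl) (fun t => rfl) (fun t => rfl) (fun t => rfl)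
    (fun t => hγ t) hg1 hg2 hg3

end
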